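/- arXiv:2508.04607 — 2 statements merged into one kernel-verified Lean document; each statement's English description precedes it below -/
import Mathlib

section
/- Let H be a real inner product space and a_1,a_2,a_3, b_i^± ∈ H (i=1,2,3) with a_i + b_i^+ + b_i^- = 0 for all i and b_3^+ = b_3^-. Define L^Γ_{ij} = ⟨a_i,a_j⟩, L^α_{ji} = ⟨a_i,b_j^α⟩, B^{α,β}_{ji} = ⟨b_i^α,b_j^β⟩, and K^α as in the slip-coefficient definition (K^α_{ij} = B^{α,α}_{ij} for i,j≤2; K^α_{ij} = 2B^{α,α}_{ij} when exactly one index is 3; K^α_{33}=2B^{α,α}_{33}). Suppose u, v^+, v^- ∈ ℝ³ satisfy (L^Γ u)·e_3 = -Σ_{α∈{+,-}} (L^α e_3)·v^α. Then, with ν^+ = -e_3 and ν^- = e_3, one has L^+ u·ν^+ - L^- u·ν^- + K^+ v^+·ν^+ - K^- v^-·ν^- = 0. -/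
open RealInnerProductSpace Matrix

theorem stmt_5 {H : Type*} [NormedAddCommGroup H] [InnerProductSpace ℝ H]
    (a bp bm : Fin 3 → H)
    (hconstraint : ∀ i, a i + bp i + bm i = 0)
    (hb3 : bp 2 = bm 2)
    (LΓ Lp Lm Bpp Bpm Bmp Bmm Kp Km : Matrix (Fin 3) (Fin 3) ℝ)
    (hLΓ : ∀ i j, LΓ i j = ⟪a i, a j⟫)
    (hLp : ∀ j i, Lp j i = ⟪a i, bp j⟫)
    (hLm : ∀ j i, Lm j i = ⟪a i, bm j⟫)
    (hBpp : ∀ j i, Bpp j i = ⟪bp i, bp j⟫)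
    (hBpm : ∀ j i, Bpm j i = ⟪bp i, bm j⟫)
    (hBmp : ∀ j i, Bmp j i = ⟪bm i, bp j⟫)
    (hBmm : ∀ j i, Bmm j i = ⟪bm i, bm j⟫)
    (hKp : ∀ i j, Kp i j = if i = 2 ∨ j = 2 then 2 * Bpp i j else Bpp i j)
    (hKm : ∀ i j, Km i j = if i = 2 ∨ j = 2 then 2 * Bmm i j else Bmm i j)
    (u vp vm : Fin 3 → ℝ)
    (hmembrane : (LΓ.mulVec u) ⬝ᵥ (Pi.single 2 1)
      = -((Lp.mulVec (Pi.single 2 1)) ⬝ᵥ vp + (Lm.mulVec (Pi.single 2 1)) ⬝ᵥ vm)) :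
    (Lp.mulVec u) ⬝ᵥ (-(Pi.single 2 1)) - (Lm.mulVec u) ⬝ᵥ (Pi.single 2 1)
      + (Kp.mulVec vp) ⬝ᵥ (-(Pi.single 2 1)) - (Km.mulVec vm) ⬝ᵥ (Pi.single 2 1) = 0 := by
  have ha : ∀ i, a i = -(bp i + bm i) := fun i => by
    have h := hconstraint i
    rw [add_assoc] at h
    exact eq_neg_of_add_eq_zero_left h
  simp only [dotProduct, mulVec, Fin.sum_univ_three, hLΓ, hLp, hLm, hBpp, hBmm, hKp, hKm,
    ha, hb3, inner_neg_left, inner_neg_right, inner_add_left, inner_add_right,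
    Pi.single_apply, Pi.neg_apply, Fin.isValue, show ((0:Fin 3) = 2) = False by simp [Fin.ext_iff],
    show ((1:Fin 3) = 2) = False by simp [Fin.ext_iff], if_false, if_true, eq_self_iff_true,
    mul_zero, zero_mul, add_zero, zero_add, mul_one, one_mul, or_true, true_or, false_or, or_false] at hmembrane ⊢
  linear_combination hmembrane
    - 2*u 0*(real_inner_comm (bp 0) (bm 2)) - 2*u 1*(real_inner_comm (bp 1) (bm 2))
    - 2*u 2*(real_inner_comm (bm 2) (bm 2)) - 2*u 0*(real_inner_comm (bm 0) (bm 2))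
    - 2*u 1*(real_inner_comm (bm 1) (bm 2)) - 2*u 2*(real_inner_comm (bm 2) (bm 2))
    + 2*vp 0*(real_inner_comm (bp 0) (bm 2)) + 2*vp 1*(real_inner_comm (bp 1) (bm 2))
    + 2*vp 2*(real_inner_comm (bm 2) (bm 2)) + 2*vm 0*(real_inner_comm (bm 0) (bm 2))
    + 2*vm 1*(real_inner_comm (bm 1) (bm 2)) + 2*vm 2*(real_inner_comm (bm 2) (bm 2))
end

section
/- In the setting of the previous abstract effective-tensor construction (H real inner product space, A symmetric, G : V → H linear, M_{ij} ∈ H, χ_{ij} ∈ V with ⟨A(M_{kl} + G χ_{kl}), G w⟩ = 0 for all w ∈ V), suppose additionally that for some index pair (k,l) there exists ψ ∈ V with M_{kl} = -G ψ. Then A*_{ijkl} = 0 for all (i,j), and also A*_{klij} = 0 for all (i,j). -/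
open RealInnerProductSpace

theorem stmt_8 {H : Type*} [NormedAddCommGroup H] [InnerProductSpace ℝ H]
    {V : Type*} [AddCommGroup V] [Module ℝ V]
    {ι : Type*} [Finite ι]
    (A : H →L[ℝ] H) (hA : ∀ x y : H, ⟪A x, y⟫ = ⟪x, A y⟫)
    (G : V →ₗ[ℝ] H) (M : ι → H) (χ : ι → V)
    (hcell : ∀ (p : ι) (w : V), ⟪A (M p + G (χ p)), G w⟫ = 0)
    (Astar : ι → ι → ℝ)
    (hAstar : ∀ p q, Astar p q = ⟪A (M q + G (χ q)), M p⟫)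
    (q₀ : ι) (ψ : V) (hψ : M q₀ = -(G ψ)) :
    (∀ p, Astar p q₀ = 0) ∧ (∀ p, Astar q₀ p = 0) := by
  have key : M q₀ + G (χ q₀) = G (χ q₀ - ψ) := by
    rw [hψ, map_sub]; abel
  constructor
  · intro p
    rw [hAstar, key]
    -- ⟪A (G w), M p⟫ = ⟪A (G w), M p + G (χ p)⟫ - ⟪A (G w), G (χ p)⟫ = 0
    have h1 : ⟪A (G (χ q₀ - ψ)), G (χ p)⟫ = 0 := by
      rw [← key]; exact hcell q₀ (χ p)
    have h2 : ⟪A (G (χ q₀ - ψ)), M p + G (χ p)⟫ = 0 := by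
      rw [hA, real_inner_comm]; exact hcell p (χ q₀ - ψ)
    have := h2
    rw [inner_add_right, h1, add_zero] at this
    exact this
  · intro p
    rw [hAstar, hψ, inner_neg_right, hcell p ψ, neg_zero]
end
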